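/- Let f : ℝⁿ → ℝ be continuously differentiable with L-Lipschitz gradient, let D be a positive spanning set of unit vectors, and suppose for step size α > 0 every poll step is unsuccessful, i.e., f(x + α d) ≥ f(x) for all d ∈ D. Then ‖∇f(x)‖ ≤ (L α)/(2 κ(D)), where κ(D) = min over unit vectors v of max over d ∈ D of ⟨v, d⟩ is the cosine measure of D (assumed positive). -/

import Mathlib

/-! The descent lemma `f (x + w) ≤ f x + ⟪∇f x, w⟫ + L/2 ‖w‖²`, applied to the unsuccessful poll
steps `w = α d`, gives `-⟪∇f x, d⟫ ≤ Lα/2` for every `d ∈ D`. Testing the infimum defining `κ(D)`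
at the unit vector `-∇f x / ‖∇f x‖` then yields `κ(D) ‖∇f x‖ ≤ Lα/2`. -/

open InnerProductSpace

section Descent

variable {E : Type*} [NormedAddCommGroup E] [NormedSpace ℝ E] {f : E → ℝ} {L : NNReal}

lemma fderiv_sub_fderiv_apply_le (hL : LipschitzWith L (fderiv ℝ f)) (x w : E) {t : ℝ}
    (ht : 0 ≤ t) : (fderiv ℝ f (x + t • w) - fderiv ℝ f x) w ≤ L * t * ‖w‖ ^ 2 :=
  calc (fderiv ℝ f (x + t • w) - fderiv ℝ f x) w
      ≤ ‖fderiv ℝ f (x + t • w) - fderiv ℝ f x‖ * ‖w‖ := (le_abs_self _).trans (by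
        simpa only [Real.norm_eq_abs] using (fderiv ℝ f (x + t • w) - fderiv ℝ f x).le_opNorm w)
    _ ≤ L * ‖t • w‖ * ‖w‖ := by
        gcongr
        simpa only [dist_eq_norm, add_sub_cancel_left] using hL.dist_le_mul (x + t • w) x
    _ = L * t * ‖w‖ ^ 2 := by rw [norm_smul, Real.norm_of_nonneg ht]; ring

theorem le_add_fderiv_add_of_lipschitzWith_fderiv (hf : Differentiable ℝ f)
    (hL : LipschitzWith L (fderiv ℝ f)) (x w : E) :
    f (x + w) ≤ f x + fderiv ℝ f x w + L / 2 * ‖w‖ ^ 2 := by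
  set φ : ℝ → ℝ := fun t => f (x + t • w) - t * fderiv ℝ f x w - L / 2 * t ^ 2 * ‖w‖ ^ 2
  have hφ : ∀ t, HasDerivAt φ
      (fderiv ℝ f (x + t • w) w - fderiv ℝ f x w - L * t * ‖w‖ ^ 2) t := by
    intro t
    have hline : HasDerivAt (fun t : ℝ => x + t • w) w t := by
      simpa using ((hasDerivAt_id t).smul_const w).const_add x
    have hquad := ((hasDerivAt_pow 2 t).const_mul ((L : ℝ) / 2)).mul_const (‖w‖ ^ 2)
    exact (((hf _).hasFDerivAt.comp_hasDerivAt t hline).sub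
      ((hasDerivAt_id t).mul_const (fderiv ℝ f x w))).sub hquad |>.congr_deriv (by
        push_cast; ring)
  have hanti : AntitoneOn φ (Set.Icc 0 1) := by
    refine antitoneOn_of_deriv_nonpos (convex_Icc 0 1)
      (HasDerivAt.continuousOn fun t _ => hφ t)
      (fun t _ => (hφ t).differentiableAt.differentiableWithinAt) fun t ht => ?_
    rw [interior_Icc] at ht
    have hslope := fderiv_sub_fderiv_apply_le hL x w ht.1.le
    rw [sub_apply] at hslope
    rw [(hφ t).deriv]
    linarith
  have := hanti (Set.left_mem_Icc.2 zero_le_one) (Set.right_mem_Icc.2 zero_le_one) zero_le_one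
  simp only [φ, zero_smul, add_zero, one_smul, zero_mul, sub_zero, one_pow, mul_one, one_mul,
    ne_eq, OfNat.ofNat_ne_zero, not_false_eq_true, zero_pow] at this
  linarith

end Descent

section Gradient

variable {E : Type*} [NormedAddCommGroup E] [InnerProductSpace ℝ E] [CompleteSpace E]
  {f : E → ℝ} {L : NNReal}

theorem le_add_inner_gradient_add_of_lipschitzWith_gradient (hf : Differentiable ℝ f)
    (hL : LipschitzWith L (gradient f)) (x w : E) :
    f (x + w) ≤ f x + ⟪gradient f x, w⟫_ℝ + L / 2 * ‖w‖ ^ 2 := by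
  have hL' : LipschitzWith L (fderiv ℝ f) := by
    simpa only [toDual_comp_gradient, one_mul] using (toDual ℝ E).lipschitz.comp hL
  simpa only [← toDual_gradient, toDual_apply_apply] using
    le_add_fderiv_add_of_lipschitzWith_fderiv hf hL' x w

theorem neg_inner_gradient_le_of_le_add_smul (hf : Differentiable ℝ f)
    (hL : LipschitzWith L (gradient f)) {x d : E} (hd : ‖d‖ = 1) {α : ℝ} (hα : 0 < α)
    (hpoll : f x ≤ f (x + α • d)) : -⟪gradient f x, d⟫_ℝ ≤ L * α / 2 := by
  have h := le_add_inner_gradient_add_of_lipschitzWith_gradient hf hL x (α • d)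
  rw [real_inner_smul_right, norm_smul, hd, Real.norm_of_nonneg hα.le] at h
  nlinarith

end Gradient

/-- The cosine measure of a finite set `D` of vectors:
`κ(D) = min_{‖v‖=1} max_{d ∈ D} ⟨v, d⟩`. -/
noncomputable def cosineMeasure {n : ℕ} (D : Finset (EuclideanSpace ℝ (Fin n))) : ℝ :=
  ⨅ v : {v : EuclideanSpace ℝ (Fin n) // ‖v‖ = 1}, ⨆ d : D, (inner ℝ v.1 d.1 : ℝ)

section CosineMeasure

variable {n : ℕ} {D : Finset (EuclideanSpace ℝ (Fin n))}

@[simp]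
theorem cosineMeasure_empty : cosineMeasure (∅ : Finset (EuclideanSpace ℝ (Fin n))) = 0 := by
  simp [cosineMeasure]

theorem nonempty_of_cosineMeasure_ne_zero (h : cosineMeasure D ≠ 0) : D.Nonempty := by
  rw [Finset.nonempty_iff_ne_empty]
  rintro rfl
  exact h cosineMeasure_empty

theorem cosineMeasure_le_of_forall_inner_le (hD : D.Nonempty) {v : EuclideanSpace ℝ (Fin n)}
    (hv : ‖v‖ = 1) {c : ℝ} (h : ∀ d ∈ D, ⟪v, d⟫_ℝ ≤ c) : cosineMeasure D ≤ c := by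
  have : Nonempty D := hD.coe_sort
  obtain ⟨d₀, hd₀⟩ := hD
  have hbdd : BddBelow (Set.range fun u : {u : EuclideanSpace ℝ (Fin n) // ‖u‖ = 1} =>
      ⨆ d : D, ⟪u.1, d.1⟫_ℝ) := by
    refine ⟨-‖d₀‖, Set.forall_mem_range.2 fun u => ?_⟩
    calc -‖d₀‖ = -(‖u.1‖ * ‖d₀‖) := by rw [u.2, one_mul]
      _ ≤ ⟪u.1, d₀⟫_ℝ := neg_le_of_abs_le (abs_real_inner_le_norm _ _)
      _ ≤ ⨆ d : D, ⟪u.1, d.1⟫_ℝ :=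
        le_ciSup (f := fun d : D => ⟪u.1, d.1⟫_ℝ) (Set.finite_range _).bddAbove ⟨d₀, hd₀⟩
  exact (ciInf_le hbdd ⟨v, hv⟩).trans (ciSup_le fun d => h d d.2)

theorem cosineMeasure_mul_norm_le (hD : D.Nonempty) (v : EuclideanSpace ℝ (Fin n)) {c : ℝ}
    (h : ∀ d ∈ D, ⟪v, d⟫_ℝ ≤ c) : cosineMeasure D * ‖v‖ ≤ c := by
  rcases eq_or_ne v 0 with rfl | hv
  · obtain ⟨d₀, hd₀⟩ := hD
    simpa using h d₀ hd₀
  have hpos : 0 < ‖v‖ := norm_pos_iff.2 hv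
  rw [← le_div_iff₀ hpos]
  refine cosineMeasure_le_of_forall_inner_le hD (norm_smul_inv_norm (𝕜 := ℝ) hv) fun d hd => ?_
  rw [real_inner_smul_left, inv_mul_eq_div]
  exact div_le_div_of_nonneg_right (h d hd) hpos.le

end CosineMeasure

theorem gradient_norm_bound_of_unsuccessful_polls {n : ℕ}
    (f : EuclideanSpace ℝ (Fin n) → ℝ) (hf : ContDiff ℝ 1 f)
    (L : NNReal) (hL : LipschitzWith L (gradient f))
    (D : Finset (EuclideanSpace ℝ (Fin n))) (hunit : ∀ d ∈ D, ‖d‖ = 1)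
    (hκ : 0 < cosineMeasure D)
    (x : EuclideanSpace ℝ (Fin n)) (α : ℝ) (hα : 0 < α)
    (hpoll : ∀ d ∈ D, f x ≤ f (x + α • d)) :
    ‖gradient f x‖ ≤ (L : ℝ) * α / (2 * cosineMeasure D) := by
  have hslope : ∀ d ∈ D, ⟪-gradient f x, d⟫_ℝ ≤ L * α / 2 := fun d hd => by
    rw [inner_neg_left]
    exact neg_inner_gradient_le_of_le_add_smul (hf.differentiable one_ne_zero) hL
      (hunit d hd) hα (hpoll d hd)
  have := cosineMeasure_mul_norm_le (nonempty_of_cosineMeasure_ne_zero hκ.ne') _ hslope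
  rw [norm_neg] at this
  rw [le_div_iff₀ (by positivity)]
  linarith
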